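/- arXiv:1912.12962 — 2 statements merged into one kernel-verified Lean document; each statement's English description precedes it below -/
import Mathlib

section
/- Let T be a Silver tree with stem decomposition given by strings u₀, u₁, u₂, …, let m = |u₀|, and let s = 0^m ⌢ ⟨1⟩ (the string of m zeros followed by 1). Then s ⁺ T = T. -/
/-- Cantor-space equivalence E₀: x E₀ y iff they differ in finitely many coordinates. -/
def E0 (x y : ℕ → Bool) : Prop := {n | x n ≠ y n}.Finite

/-- E_e: the symmetric difference is finite of even cardinality. -/
def Ee (x y : ℕ → Bool) : Prop :=
  {n | x n ≠ y n}.Finite ∧ Even (Nat.card {n | x n ≠ y n})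

/-- Full branch-string of a Silver tree scheme `u` along choices `i`. -/
def sFull (u : ℕ → List Bool) : List Bool → List Bool
  | [] => []
  | i :: rest => (u 0 ++ [i]) ++ sFull (fun n => u (n + 1)) rest

/-- The Silver tree determined by the sequence of strings `u`:
all strings u₀⌢⟨i₀⟩⌢…⌢u_m⌢⟨i_m⟩ together with their initial segments. -/
def silverTree (u : ℕ → List Bool) : Set (List Bool) :=
  {t | ∃ i : List Bool, t <+: sFull u i}

/-- Pointwise mod-2 shift of a finite string `t` by a finite string `s`. -/
def shiftStr (s t : List Bool) : List Bool :=
  List.ofFn (fun k : Fin t.length => xor (t.get k) (s.getD k false))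

/-- Pointwise mod-2 shift of a real `a` by a finite string `s`. -/
def shiftReal (s : List Bool) (a : ℕ → Bool) : ℕ → Bool :=
  fun k => xor (a k) (s.getD k false)

/-- The set of branches of a tree `T ⊆ 2^{<ω}`. -/
def branches (T : Set (List Bool)) : Set (ℕ → Bool) :=
  {x | ∀ k, (List.ofFn fun j : Fin k => x j) ∈ T}

/-
Flipping bit `m = |u₀|` of a branch string `u₀⌢⟨i⟩⌢…` toggles the first choice `i`, so it
sends branch strings of `T` to branch strings of `T`; since the shift commutes with taking
prefixes, it maps `T` into itself, and being an involution it then maps `T` onto itself.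
-/

@[simp]
lemma shiftStr_nil_left (t : List Bool) : shiftStr [] t = t := by
  simp [shiftStr, List.ofFn_getElem]

@[simp]
lemma shiftStr_cons_cons (x y : Bool) (s t : List Bool) :
    shiftStr (x :: s) (y :: t) = xor y x :: shiftStr s t := by
  simp [shiftStr, List.ofFn_succ]

lemma shiftStr_shiftStr (s t : List Bool) : shiftStr s (shiftStr s t) = t := by
  induction t generalizing s with
  | nil => rfl
  | cons y t ih => cases s <;> simp [ih]

lemma shiftStr_append (s a c : List Bool) :
    shiftStr s (a ++ c) = shiftStr s a ++ shiftStr (s.drop a.length) c := by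
  induction a generalizing s with
  | nil => rfl
  | cons y a ih => cases s <;> simp [ih]

lemma List.IsPrefix.shiftStr {t w : List Bool} (h : t <+: w) (s : List Bool) :
    shiftStr s t <+: shiftStr s w := by
  obtain ⟨c, rfl⟩ := h
  exact ⟨_, (shiftStr_append s t c).symm⟩

lemma shiftStr_replicate_false_append_true (a c : List Bool) (b : Bool) :
    shiftStr (List.replicate a.length false ++ [true]) (a ++ b :: c) = a ++ (!b) :: c := by
  induction a with
  | nil => simp
  | cons y a ih => simpa [List.replicate_succ] using ih

lemma sFull_cons (u : ℕ → List Bool) (i : Bool) (r : List Bool) :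
    sFull u (i :: r) = u 0 ++ i :: sFull (fun n => u (n + 1)) r := by
  simp [sFull]

lemma mapsTo_shiftStr_silverTree (u : ℕ → List Bool) :
    Set.MapsTo (shiftStr (List.replicate (u 0).length false ++ [true]))
      (silverTree u) (silverTree u) := by
  set s := List.replicate (u 0).length false ++ [true]
  rintro t ⟨_ | ⟨i, r⟩, hpre⟩
  · exact ⟨[], hpre.shiftStr s⟩
  · refine ⟨(!i) :: r, ?_⟩
    simpa only [s, sFull_cons, shiftStr_replicate_false_append_true] using hpre.shiftStr s

/-- for s = 0^{|u₀|}⌢⟨1⟩, the shift s ⁺ T fixes the Silver tree T. -/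
theorem silver_shift_invariant (u : ℕ → List Bool) :
    shiftStr (List.replicate (u 0).length false ++ [true]) '' silverTree u
      = silverTree u := by
  set s := List.replicate (u 0).length false ++ [true]
  have hmaps : Set.MapsTo (shiftStr s) (silverTree u) (silverTree u) :=
    mapsTo_shiftStr_silverTree u
  have hinv : Set.RightInvOn (shiftStr s) (shiftStr s) (silverTree u) :=
    fun t _ => shiftStr_shiftStr s t
  exact (hinv.surjOn hmaps).image_eq_of_mapsTo hmaps
end

section
/- If T is a Silver tree and a ∈ [T] (a is a branch through T), then for the string s = 0^m ⌢ ⟨1⟩ where m = |u₀(T)|, the real b = s ⁺ a also belongs to [T], and a E₀ b but not a E_e b. -/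
/-! The string `0^|u₀| ⌢ ⟨1⟩` flips exactly coordinate `|u₀|` of a real. Along every branch of a
Silver tree that coordinate is the free choice `i₀`, so flipping it keeps every initial segment
in the tree, while `a` and the shifted real differ in a single place, an odd number. -/

lemma List.IsPrefix.set {α : Type*} {l₁ l₂ : List α} (h : l₁ <+: l₂) (n : ℕ) (x : α) :
    l₁.set n x <+: l₂.set n x := by
  obtain ⟨t, rfl⟩ := h
  rcases lt_or_ge n l₁.length with hn | hn
  · exact ⟨t, by rw [List.set_append_left _ _ hn]⟩
  · exact ⟨t.set (n - l₁.length) x,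
      by rw [List.set_append_right _ _ hn, List.set_eq_of_length_le hn]⟩

lemma List.ofFn_update {α : Type*} (k : ℕ) (a : ℕ → α) (m : ℕ) (x : α) :
    List.ofFn (fun j : Fin k => Function.update a m x j) =
      (List.ofFn fun j : Fin k => a j).set m x := by
  apply List.ext_getElem (by simp)
  intro j _ _
  simp [List.getElem_set, Function.update_apply, eq_comm]

lemma sFull_cons_eq_set (u : ℕ → List Bool) (b c : Bool) (rest : List Bool) :
    sFull u (b :: rest) = (sFull u (c :: rest)).set (u 0).length b := by
  simp [sFull]

lemma set_mem_silverTree {u : ℕ → List Bool} {t : List Bool} (ht : t ∈ silverTree u) (b : Bool) :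
    t.set (u 0).length b ∈ silverTree u := by
  obtain ⟨i, hi⟩ := ht
  cases i with
  | nil => exact ⟨[], by simp [List.prefix_nil.mp hi, sFull]⟩
  | cons c rest => exact ⟨b :: rest, sFull_cons_eq_set u b c rest ▸ hi.set _ b⟩

lemma update_mem_branches {T : Set (List Bool)} {m : ℕ} {b : Bool}
    (hT : ∀ t ∈ T, t.set m b ∈ T) {a : ℕ → Bool} (ha : a ∈ branches T) :
    Function.update a m b ∈ branches T := fun k => by
  rw [List.ofFn_update]
  exact hT _ (ha k)

lemma shiftReal_replicate_false_append_true (m : ℕ) (a : ℕ → Bool) :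
    shiftReal (List.replicate m false ++ [true]) a = Function.update a m (!a m) := by
  funext k
  rcases lt_trichotomy k m with h | rfl | h
  · simp [shiftReal, List.getD, List.getElem?_append_left, h, h.ne]
  · simp [shiftReal, List.getD]
  · simp [shiftReal, List.getD, h, h.ne']

lemma setOf_ne_update_not (a : ℕ → Bool) (m : ℕ) :
    {n | a n ≠ Function.update a m (!a m) n} = {m} := by
  ext n
  by_cases h : n = m <;> simp [h, Function.update_apply]

/-- for a branch a of a Silver tree, b = s ⁺ a (s = 0^{|u₀|}⌢⟨1⟩)
is again a branch, E₀- but not E_e-equivalent to a. -/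
theorem silver_branch_shift (u : ℕ → List Bool) (a : ℕ → Bool)
    (ha : a ∈ branches (silverTree u)) :
    shiftReal (List.replicate (u 0).length false ++ [true]) a ∈ branches (silverTree u) ∧
    E0 a (shiftReal (List.replicate (u 0).length false ++ [true]) a) ∧
    ¬ Ee a (shiftReal (List.replicate (u 0).length false ++ [true]) a) := by
  rw [shiftReal_replicate_false_append_true]
  refine ⟨update_mem_branches (fun t ht => set_mem_silverTree ht _) ha, ?_, ?_⟩
  · rw [E0, setOf_ne_update_not]
    exact Set.finite_singleton _
  · rw [Ee, setOf_ne_update_not]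
    rintro ⟨-, h⟩
    simp at h
end
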